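/- Let L = Lie_ℚ(u_1,…,u_r)/((l)) be the quadratic Lie algebra over ℚ on r ≥ 3 generators, each of positive degree, with a single quadratic relation l of the form u_1⊗u_r − Σ_{(i,j)≠(1,r)} a_{ij} u_i⊗u_j lying in the free Lie algebra. Then L is infinite-dimensional over ℚ; in particular there exist l-standard Lyndon words of arbitrarily large length. -/

import Mathlib

/-!
Fix a generator `u_k` and a vector `t` with `t_k = 0`, and represent the free Lie algebra on
`ℚ[X]` by sending `u_k` to `x`, multiplication by `X`, and each `u_j` (`j ≠ k`) to `t_j • y`,
where `y` is the projection onto the constant term. As `y * x = 0`, the iterated brackets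
`ad(x)ⁿ y = xⁿ * y` are linearly independent (apply them to `1`). A quadratic relation is sent
to a multiple of `⁅x, y⁆` whose coefficient is linear in `t`; with at least three generators
some `t ≠ 0` with `t_k = 0` kills it, and then the brackets `ad(u_k)ⁿ u_i` with `t_i ≠ 0` stay
linearly independent modulo the relation. The long Lyndon words are `u_1ⁿ u_2`.
-/

open Polynomial

attribute [local instance 100] LieRing.ofAssociativeRing

def IsLyndon {α : Type} [LinearOrder α] (w : List α) : Prop :=
  w ≠ [] ∧ ∀ k : ℕ, 0 < k → k < w.length → w < w.rotate k

theorem isLyndon_replicate_append {α : Type} [LinearOrder α] {a b : α} (hab : a < b) (n : ℕ) :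
    IsLyndon (List.replicate n a ++ [b]) := by
  refine ⟨by simp, fun k hk hkn => ?_⟩
  simp only [List.length_append, List.length_replicate, List.length_singleton] at hkn
  obtain ⟨j, rfl⟩ : ∃ j, k = j + 1 := ⟨k - 1, by omega⟩
  obtain ⟨m, rfl⟩ : ∃ m, n = m + (j + 1) := ⟨n - (j + 1), by omega⟩
  have hrot : (List.replicate (m + (j + 1)) a ++ [b]).rotate (j + 1) =
      List.replicate m a ++ b :: List.replicate (j + 1) a := by
    simpa [List.replicate_add, add_comm m] using
      List.rotate_append_length_eq (List.replicate (j + 1) a) (List.replicate m a ++ [b])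
  have hword : List.replicate (m + (j + 1)) a ++ [b] =
      List.replicate m a ++ a :: (List.replicate j a ++ [b]) := by
    simp [List.replicate_add, List.replicate_succ]
  rw [hrot, hword]
  exact List.Lex.append_left _ (List.Lex.rel hab) _

theorem List.isChain_not_and_of_notMem {α : Type*} {a b : α} {l : List α} (hb : b ∉ l) :
    l.IsChain fun s t => ¬(s = a ∧ t = b) :=
  (List.pairwise_of_forall_mem_list fun _ _ _ ht ⟨_, hsb⟩ => hb (hsb ▸ ht)).isChain

theorem lie_iterate_eq_pow_mul_of_mul_eq_zero {A : Type*} [Ring A] {x y : A} (h : y * x = 0)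
    (n : ℕ) : (fun z => ⁅x, z⁆)^[n] y = x ^ n * y := by
  induction n with
  | zero => simp
  | succ n ih =>
    rw [Function.iterate_succ_apply', ih, Ring.lie_def, mul_assoc, h, mul_zero, sub_zero,
      pow_succ', mul_assoc]

theorem lie_smul_add_smul_smul_add_smul {R L : Type*} [CommRing R] [LieRing L] [LieAlgebra R L]
    (x y : L) (a b c d : R) :
    ⁅a • x + b • y, c • x + d • y⁆ = (a * d - b * c) • ⁅x, y⁆ := by
  simp only [add_lie, lie_add, smul_lie, lie_smul, lie_self]
  rw [← lie_skew y x]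
  module

theorem exists_ne_zero_apply_eq_zero_of_two_lt_card {K ι : Type*} [Field K] [Fintype ι]
    (hι : 2 < Fintype.card ι) (f : (ι → K) →ₗ[K] K) (i : ι) :
    ∃ t : ι → K, t ≠ 0 ∧ t i = 0 ∧ f t = 0 := by
  have hker : LinearMap.ker ((LinearMap.proj i).prod f) ≠ ⊥ :=
    LinearMap.ker_ne_bot_of_finrank_lt (by simpa using hι)
  obtain ⟨t, ht, ht0⟩ := (Submodule.ne_bot_iff _).mp hker
  rw [LinearMap.mem_ker, LinearMap.prod_apply, Prod.mk_eq_zero] at ht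
  exact ⟨t, ht0, ht⟩

theorem LieIdeal.not_finiteDimensional_quotient_of_le_ker {K L L' ι : Type*} [Field K]
    [LieRing L] [LieAlgebra K L] [LieRing L'] [LieAlgebra K L'] [Infinite ι] {I : LieIdeal K L}
    (φ : L →ₗ⁅K⁆ L') (hI : I ≤ φ.ker) {v : ι → L} (hv : LinearIndependent K fun n => φ (v n)) :
    ¬ FiniteDimensional K (L ⧸ I) := by
  intro hfin
  let ψ := Submodule.liftQ (I : Submodule K L) φ.toLinearMap fun z hz => hI hz
  have : LinearIndependent K fun n => (Submodule.Quotient.mk (v n) : L ⧸ I) :=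
    LinearIndependent.of_comp ψ hv
  have := this.finite
  exact not_finite ι

namespace Polynomial

variable (R : Type*) [CommRing R]

noncomputable def constProj : Module.End R R[X] :=
  monomial 0 ∘ₗ lcoeff R 0

theorem constProj_mul_mulLeft_X :
    constProj R * LinearMap.mulLeft R (X : R[X]) = 0 := by
  refine LinearMap.ext fun p => ?_
  simp [constProj]

theorem linearIndependent_mulLeft_X_pow_mul_constProj [Nontrivial R] :
    LinearIndependent R fun n : ℕ =>
      LinearMap.mulLeft R (X : R[X]) ^ n * constProj R := by
  refine LinearIndependent.of_comp (LinearMap.applyₗ (1 : R[X])) ?_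
  have h : (LinearMap.applyₗ (1 : R[X]) ∘ fun n : ℕ =>
      LinearMap.mulLeft R (X : R[X]) ^ n * constProj R) = basisMonomials R := by
    ext n : 1
    simp [constProj, LinearMap.pow_mulLeft, X_pow_eq_monomial]
  rw [h]
  exact (basisMonomials R).linearIndependent

end Polynomial

theorem FreeLieAlgebra.not_finiteDimensional_quotient_lieSpan_quadratic {K ι : Type*} [Field K]
    [Fintype ι] (hι : 2 < Fintype.card ι) (b : ι × ι → K) :
    ¬ FiniteDimensional K (FreeLieAlgebra K ι ⧸
      LieSubmodule.lieSpan K (FreeLieAlgebra K ι) {∑ p, b p • ⁅of K p.1, of K p.2⁆}) := by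
  classical
  obtain ⟨k⟩ : Nonempty ι := Fintype.card_pos_iff.mp (by omega)
  set s : ι → K := Pi.single k 1
  -- the coefficient of `⁅x, y⁆` in the image of the relation below
  let coeff : (ι → K) →ₗ[K] K :=
    ∑ p, b p • (s p.1 • LinearMap.proj p.2 - s p.2 • LinearMap.proj p.1)
  obtain ⟨t, ht, htk, hcoeff⟩ := exists_ne_zero_apply_eq_zero_of_two_lt_card hι coeff k
  obtain ⟨i, hi⟩ := Function.ne_iff.mp ht
  have hik : i ≠ k := fun h => hi (h ▸ htk)
  set x : Module.End K K[X] := LinearMap.mulLeft K X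
  set y := constProj K
  let φ := lift K fun j => s j • x + t j • y
  have hφ_of : ∀ j, φ (of K j) = s j • x + t j • y := fun j => lift_of_apply _ _
  have hφ_iterate : ∀ n, φ ((fun z => ⁅of K k, z⁆)^[n] (of K i)) = t i • (x ^ n * y) := by
    intro n
    have hφk : φ (of K k) = x := by simp [hφ_of, s, htk]
    have hsemi : Function.Semiconj φ (fun z => ⁅of K k, z⁆) (fun z => ⁅x, z⁆) := fun z => by
      rw [LieHom.map_lie, hφk]
    rw [(hsemi.iterate_right n).eq, hφ_of]
    have hsi : s i = 0 := Pi.single_eq_of_ne hik 1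
    rw [hsi, zero_smul, zero_add, lie_iterate_eq_pow_mul_of_mul_eq_zero
      (by rw [smul_mul_assoc, constProj_mul_mulLeft_X, smul_zero]), mul_smul_comm]
  refine LieIdeal.not_finiteDimensional_quotient_of_le_ker φ ?_ (v := fun n =>
    (fun z => ⁅of K k, z⁆)^[n] (of K i)) ?_
  · rw [LieSubmodule.lieSpan_le, Set.singleton_subset_iff, SetLike.mem_coe, LieHom.mem_ker]
    have hφ_lie : ∀ p : ι × ι,
        φ ⁅of K p.1, of K p.2⁆ = (s p.1 * t p.2 - t p.1 * s p.2) • ⁅x, y⁆ := fun p => by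
      rw [LieHom.map_lie, hφ_of, hφ_of]
      exact lie_smul_add_smul_smul_add_smul x y _ _ _ _
    simp only [map_sum, map_smul, hφ_lie, smul_smul, ← Finset.sum_smul]
    convert zero_smul K ⁅x, y⁆
    simpa [coeff, mul_sub, mul_comm] using hcoeff
  · simp only [hφ_iterate]
    exact (linearIndependent_mulLeft_X_pow_mul_constProj K).units_smul fun _ => Units.mk0 _ hi

/-- Let `L = Lie_ℚ(u_1,…,u_r)/((l))` be the quadratic Lie algebra over
`ℚ` on `r ≥ 3` generators with a single quadratic relation
`l = ⁅u_1, u_r⁆ - Σ_{(i,j) ≠ (1,r)} a_{ij} ⁅u_i, u_j⁆` (a quadratic element of the free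
Lie algebra with leading term `u_1 ⊗ u_r`).  Then `L` is infinite-dimensional over `ℚ`;
in particular there exist `l`-standard Lyndon words (Lyndon words avoiding the
submonomial `u_1 u_r`) of arbitrarily large length. -/
theorem stmt12 (r : ℕ) (hr : 3 ≤ r) (a : Fin r × Fin r → ℚ) :
    let i0 : Fin r := ⟨0, by omega⟩
    let i1 : Fin r := ⟨r - 1, by omega⟩
    let l : FreeLieAlgebra ℚ (Fin r) :=
      ⁅FreeLieAlgebra.of ℚ i0, FreeLieAlgebra.of ℚ i1⁆ -
        ∑ p ∈ Finset.univ.erase (i0, i1),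
          a p • ⁅FreeLieAlgebra.of ℚ p.1, FreeLieAlgebra.of ℚ p.2⁆
    ∀ I : LieIdeal ℚ (FreeLieAlgebra ℚ (Fin r)),
      I = LieSubmodule.lieSpan ℚ (FreeLieAlgebra ℚ (Fin r)) {l} →
      ¬ FiniteDimensional ℚ (FreeLieAlgebra ℚ (Fin r) ⧸ I) ∧
        ∀ N : ℕ, ∃ w : List (Fin r),
          IsLyndon w ∧ (w.Chain' fun s t => ¬(s = i0 ∧ t = i1)) ∧ N < w.length := by
  intro i0 i1 l I hI
  have hl : l = ∑ p, (if p = (i0, i1) then 1 else -a p) •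
      ⁅FreeLieAlgebra.of ℚ p.1, FreeLieAlgebra.of ℚ p.2⁆ := by
    rw [← Finset.add_sum_erase _ _ (Finset.mem_univ (i0, i1)), if_pos rfl, one_smul]
    simp only [l, sub_eq_add_neg, ← Finset.sum_neg_distrib]
    refine congrArg _ (Finset.sum_congr rfl fun p hp => ?_)
    rw [if_neg (Finset.ne_of_mem_erase hp), neg_smul]
  let u : Fin r := ⟨1, by omega⟩
  refine ⟨?_, fun N => ⟨List.replicate N i0 ++ [u], isLyndon_replicate_append ?_ N, ?_, by simp⟩⟩
  · rw [hI, hl]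
    exact FreeLieAlgebra.not_finiteDimensional_quotient_lieSpan_quadratic (by rw [Fintype.card_fin]; omega) _
  · simp [i0, u, Fin.lt_def]
  · refine List.isChain_not_and_of_notMem ?_
    simp only [List.mem_append, List.mem_replicate, List.mem_singleton, Fin.ext_iff, i0, i1, u]
    omega
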